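/- arXiv:2410.05728 — 7 statements merged into one kernel-verified Lean document; each statement's English description precedes it below -/
import Mathlib

section
/- The pair of operators (↑π, ↓N) defined on a multi-adjoint property-oriented context forms an isotone Galois connection: for all g ∈ L₂^B and f ∈ L₁^A, g^{↑π} ≤₁ f if and only if g ≤₂ f^{↓N}. -/
/-- The possibility operator of a multi-adjoint property-oriented context. -/
def upPi {A B P L1 L2 : Type*} [CompleteLattice L1] [CompleteLattice L2]
    [PartialOrder P] {n : ℕ} (andI : Fin n → P → L2 → L1)
    (R : A → B → P) (σ : A → B → Fin n) (g : B → L2) : A → L1 :=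
  fun a => ⨆ b, andI (σ a b) (R a b) (g b)

/-- The necessity operator of a multi-adjoint property-oriented context. -/
def downN {A B P L1 L2 : Type*} [CompleteLattice L1] [CompleteLattice L2]
    [PartialOrder P] {n : ℕ} (nwI : Fin n → L1 → P → L2)
    (R : A → B → P) (σ : A → B → Fin n) (f : A → L1) : B → L2 :=
  fun b => ⨅ a, nwI (σ a b) (f a) (R a b)

/-- `(↑π, ↓N)` is an isotone Galois connection: `g^{↑π} ≤ f ↔ g ≤ f^{↓N}`. -/
theorem upPi_downN_galois
    {A B P L1 L2 : Type*} [CompleteLattice L1] [CompleteLattice L2]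
    [PartialOrder P] {n : ℕ}
    (andI : Fin n → P → L2 → L1) (swI : Fin n → L1 → L2 → P)
    (nwI : Fin n → L1 → P → L2)
    (adj1 : ∀ (i : Fin n) (x : P) (y : L2) (z : L1), x ≤ swI i z y ↔ andI i x y ≤ z)
    (adj2 : ∀ (i : Fin n) (x : P) (y : L2) (z : L1), andI i x y ≤ z ↔ y ≤ nwI i z x)
    (R : A → B → P) (σ : A → B → Fin n) :
    ∀ (g : B → L2) (f : A → L1),
      upPi andI R σ g ≤ f ↔ g ≤ downN nwI R σ f := by
  intro g f
  constructor
  · intro h b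
    simp only [downN, le_iInf_iff]
    intro a
    exact (adj2 _ _ _ _).mp (le_trans (le_iSup (fun b => andI (σ a b) (R a b) (g b)) b) (h a))
  · intro h a
    simp only [upPi, iSup_le_iff]
    intro b
    exact (adj2 _ _ _ _).mpr (le_trans (h b) (iInf_le (fun a => nwI (σ a b) (f a) (R a b)) a))
end

section
/- The map g ↦ g^{↑π↓N} is a closure operator on L₂^B: it is inflationary, monotone, and idempotent. -/
/-- `g ↦ g^{↑π↓N}` is a closure operator on `L₂^B`: inflationary, monotone and
idempotent. -/
theorem upPi_downN_closure
    {A B P L1 L2 : Type*} [CompleteLattice L1] [CompleteLattice L2]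
    [PartialOrder P] {n : ℕ}
    (andI : Fin n → P → L2 → L1) (swI : Fin n → L1 → L2 → P)
    (nwI : Fin n → L1 → P → L2)
    (adj1 : ∀ (i : Fin n) (x : P) (y : L2) (z : L1), x ≤ swI i z y ↔ andI i x y ≤ z)
    (adj2 : ∀ (i : Fin n) (x : P) (y : L2) (z : L1), andI i x y ≤ z ↔ y ≤ nwI i z x)
    (R : A → B → P) (σ : A → B → Fin n) :
    (∀ g : B → L2, g ≤ downN nwI R σ (upPi andI R σ g)) ∧
    (∀ g g' : B → L2, g ≤ g' →
      downN nwI R σ (upPi andI R σ g) ≤ downN nwI R σ (upPi andI R σ g')) ∧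
    (∀ g : B → L2,
      downN nwI R σ (upPi andI R σ (downN nwI R σ (upPi andI R σ g)))
        = downN nwI R σ (upPi andI R σ g)) := by
  have infl : ∀ g : B → L2, g ≤ downN nwI R σ (upPi andI R σ g) := by
    intro g b
    refine le_iInf fun a => ?_
    rw [← adj2]
    exact le_iSup (fun b => andI (σ a b) (R a b) (g b)) b
  have defl : ∀ f : A → L1, upPi andI R σ (downN nwI R σ f) ≤ f := by
    intro f a
    refine iSup_le fun b => ?_
    rw [adj2]
    exact iInf_le (fun a => nwI (σ a b) (f a) (R a b)) a
  have monoU : ∀ g g' : B → L2, g ≤ g' → upPi andI R σ g ≤ upPi andI R σ g' := by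
    intro g g' h a
    refine iSup_mono fun b => ?_
    exact (adj2 _ _ _ _).mpr (le_trans (h b) ((adj2 _ _ _ _).mp le_rfl))
  have monoD : ∀ f f' : A → L1, f ≤ f' → downN nwI R σ f ≤ downN nwI R σ f' := by
    intro f f' h b
    refine iInf_mono fun a => ?_
    exact (adj2 _ _ _ _).mp (le_trans ((adj2 _ _ _ _).mpr le_rfl) (h a))
  refine ⟨infl, fun g g' h => monoD _ _ (monoU _ _ h), fun g => ?_⟩
  exact le_antisymm (monoD _ _ (defl _)) (infl _)
end

section
/- The multi-adjoint fuzzy relation equation R ⊙_σ X = T is solvable if and only if T_w^{↓N↑π} = T_w for all w ∈ W; and in that case, the relation X* defined by X*(v,w) = T_w^{↓N}(v) is the greatest solution. -/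
/-- The sup-`&_σ`-composition `R ⊙_σ X`. -/
def supComp {U V W P L1 L2 : Type*} [CompleteLattice L1] [CompleteLattice L2]
    [PartialOrder P] {n : ℕ} (andI : Fin n → P → L2 → L1)
    (R : U → V → P) (σ : U → V → Fin n) (X : V → W → L2) : U → W → L1 :=
  fun u w => ⨆ v, andI (σ u v) (R u v) (X v w)

/-- `R ⊙_σ X = T` is solvable iff `T_w^{↓N↑π} = T_w` for all `w`; in that case
`X*(v,w) = T_w^{↓N}(v)` is the greatest solution. -/
theorem solvable_iff_closed_and_max_solution
    {U V W P L1 L2 : Type*} [Finite U] [Finite V] [Finite W]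
    [CompleteLattice L1] [CompleteLattice L2] [PartialOrder P] {n : ℕ}
    (andI : Fin n → P → L2 → L1) (swI : Fin n → L1 → L2 → P)
    (nwI : Fin n → L1 → P → L2)
    (adj1 : ∀ (i : Fin n) (x : P) (y : L2) (z : L1), x ≤ swI i z y ↔ andI i x y ≤ z)
    (adj2 : ∀ (i : Fin n) (x : P) (y : L2) (z : L1), andI i x y ≤ z ↔ y ≤ nwI i z x)
    (R : U → V → P) (σ : U → V → Fin n) (T : U → W → L1) :
    ((∃ X : V → W → L2, supComp andI R σ X = T) ↔
      ∀ w : W, upPi andI R σ (downN nwI R σ (fun u => T u w)) = fun u => T u w) ∧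
    ((∃ X : V → W → L2, supComp andI R σ X = T) →
      (supComp andI R σ (fun v w => downN nwI R σ (fun u => T u w) v) = T ∧
       ∀ X : V → W → L2, supComp andI R σ X = T →
         X ≤ fun v w => downN nwI R σ (fun u => T u w) v)) := by
  -- key facts
  have mono : ∀ (i : Fin n) (x : P) {y y' : L2}, y ≤ y' → andI i x y ≤ andI i x y' := by
    intro i x y y' h
    exact (adj2 i x y _).mpr (le_trans h ((adj2 i x y' _).mp le_rfl))
  have upDown_le : ∀ (f : U → L1), upPi andI R σ (downN nwI R σ f) ≤ f := by
    intro f u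
    refine iSup_le fun v => (adj2 _ _ _ _).mpr ?_
    exact iInf_le (fun a => nwI (σ a v) (f a) (R a v)) u
  have sol_le : ∀ (X : V → W → L2), supComp andI R σ X = T →
      X ≤ fun v w => downN nwI R σ (fun u => T u w) v := by
    intro X hX v w
    refine le_iInf fun u => (adj2 _ _ _ _).mp ?_
    calc andI (σ u v) (R u v) (X v w) ≤ ⨆ v', andI (σ u v') (R u v') (X v' w) :=
          le_iSup (fun v' => andI (σ u v') (R u v') (X v' w)) v
      _ = T u w := congrFun (congrFun hX u) w
  have star_le : ∀ u w, supComp andI R σ (fun v w => downN nwI R σ (fun u => T u w) v) u w ≤ T u w :=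
    fun u w => upDown_le (fun u => T u w) u
  have ge_of_sol : ∀ (X : V → W → L2), supComp andI R σ X = T →
      ∀ u w, T u w ≤ supComp andI R σ (fun v w => downN nwI R σ (fun u => T u w) v) u w := by
    intro X hX u w
    calc T u w = ⨆ v, andI (σ u v) (R u v) (X v w) := (congrFun (congrFun hX u) w).symm
      _ ≤ _ := iSup_mono fun v => mono _ _ (sol_le X hX v w)
  have star_sol : (∃ X : V → W → L2, supComp andI R σ X = T) →
      supComp andI R σ (fun v w => downN nwI R σ (fun u => T u w) v) = T := by
    rintro ⟨X, hX⟩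
    funext u w
    exact le_antisymm (star_le u w) (ge_of_sol X hX u w)
  constructor
  · constructor
    · intro h w
      funext u
      have := congrFun (congrFun (star_sol h) u) w
      exact this
    · intro h
      refine ⟨fun v w => downN nwI R σ (fun u => T u w) v, ?_⟩
      funext u w
      exact congrFun (h w) u
  · intro h
    exact ⟨star_sol h, sol_le⟩
end

section
/- If X is any solution of the solvable equation R ⊙_σ X = T, then X ≤ X*, where X*(v,w) = T_w^{↓N}(v); i.e., the solution X* obtained from the necessity operator is an upper bound of all solutions. -/
/-- Every solution of `R ⊙_σ X = T` is below `X*(v,w) = T_w^{↓N}(v)`. -/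
theorem solution_le_max
    {U V W P L1 L2 : Type*} [Finite U] [Finite V] [Finite W]
    [CompleteLattice L1] [CompleteLattice L2] [PartialOrder P] {n : ℕ}
    (andI : Fin n → P → L2 → L1) (swI : Fin n → L1 → L2 → P)
    (nwI : Fin n → L1 → P → L2)
    (adj1 : ∀ (i : Fin n) (x : P) (y : L2) (z : L1), x ≤ swI i z y ↔ andI i x y ≤ z)
    (adj2 : ∀ (i : Fin n) (x : P) (y : L2) (z : L1), andI i x y ≤ z ↔ y ≤ nwI i z x)
    (R : U → V → P) (σ : U → V → Fin n) (T : U → W → L1) (X : V → W → L2)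
    (hX : supComp andI R σ X = T) :
    X ≤ fun v w => downN nwI R σ (fun u => T u w) v := by
  intro v w
  simp only [downN, le_iInf_iff]
  intro u
  rw [← adj2]
  rw [← hX]
  exact le_iSup (fun v => andI (σ u v) (R u v) (X v w)) v
end

section
/- Given g ∈ L₂^V and w ∈ W, g^{↑π} = T_w if and only if g ≤₂ T_w^{↓N} and there is no concept (g',f') in the property-oriented concept lattice of (U,V,R,σ) with g ≤₂ g' <₂ T_w^{↓N}. -/
/-- `(g,f)` is a concept of the property-oriented concept lattice of `(U,V,R,σ)`. -/
def IsConcept {U V P L1 L2 : Type*} [CompleteLattice L1] [CompleteLattice L2]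
    [PartialOrder P] {n : ℕ} (andI : Fin n → P → L2 → L1)
    (nwI : Fin n → L1 → P → L2) (R : U → V → P) (σ : U → V → Fin n)
    (g : V → L2) (f : U → L1) : Prop :=
  downN nwI R σ f = g ∧ upPi andI R σ g = f

lemma upPi_downN_gc {A B P L1 L2 : Type*} [CompleteLattice L1] [CompleteLattice L2]
    [PartialOrder P] {n : ℕ} (andI : Fin n → P → L2 → L1)
    (nwI : Fin n → L1 → P → L2)
    (adj2 : ∀ (i : Fin n) (x : P) (y : L2) (z : L1), andI i x y ≤ z ↔ y ≤ nwI i z x)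
    (R : A → B → P) (σ : A → B → Fin n) :
    GaloisConnection (upPi andI R σ) (downN nwI R σ) := by
  intro g f
  simp only [upPi, downN, Pi.le_def, iSup_le_iff, le_iInf_iff]
  constructor
  · intro h b a; exact (adj2 _ _ _ _).mp (h a b)
  · intro h a b; exact (adj2 _ _ _ _).mpr (h b a)

/-- `g^{↑π} = T_w` iff `g ≤ T_w^{↓N}` and no concept extent lies strictly between
`g` and `T_w^{↓N}`. -/
theorem upPi_eq_iff_no_intermediate_extent
    {U V W P L1 L2 : Type*} [Finite U] [Finite V] [Finite W]
    [CompleteLattice L1] [CompleteLattice L2] [PartialOrder P] {n : ℕ}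
    (andI : Fin n → P → L2 → L1) (swI : Fin n → L1 → L2 → P)
    (nwI : Fin n → L1 → P → L2)
    (adj1 : ∀ (i : Fin n) (x : P) (y : L2) (z : L1), x ≤ swI i z y ↔ andI i x y ≤ z)
    (adj2 : ∀ (i : Fin n) (x : P) (y : L2) (z : L1), andI i x y ≤ z ↔ y ≤ nwI i z x)
    (R : U → V → P) (σ : U → V → Fin n) (T : U → W → L1)
    (hsolv : ∀ w : W,
      upPi andI R σ (downN nwI R σ (fun u => T u w)) = fun u => T u w)
    (g : V → L2) (w : W) :
    upPi andI R σ g = (fun u => T u w) ↔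
      (g ≤ downN nwI R σ (fun u => T u w) ∧
       ¬ ∃ (g' : V → L2) (f' : U → L1), IsConcept andI nwI R σ g' f' ∧
          g ≤ g' ∧ g' < downN nwI R σ (fun u => T u w)) := by
  have gc := upPi_downN_gc andI nwI adj2 R σ
  set Tw : U → L1 := fun u => T u w with hTw
  constructor
  · intro h
    refine ⟨(gc g Tw).mp h.le, ?_⟩
    rintro ⟨g', f', ⟨hd, hu⟩, hle, hlt⟩
    have h1 : Tw ≤ f' := by
      rw [← h, ← hu]; exact gc.monotone_l hle
    have h2 : f' ≤ Tw := by
      have hs : upPi andI R σ (downN nwI R σ Tw) = Tw := hsolv w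
      rw [← hu, ← hs]; exact gc.monotone_l hlt.le
    have hf : f' = Tw := le_antisymm h2 h1
    exact hlt.ne (by rw [← hd, hf])
  · rintro ⟨hle, hno⟩
    set f' := upPi andI R σ g with hf'
    set g' := downN nwI R σ f' with hg'
    have hconc : IsConcept andI nwI R σ g' f' := ⟨rfl, gc.l_u_l_eq_l g⟩
    have hgg' : g ≤ g' := gc.le_u_l g
    have hfT : f' ≤ Tw := (gc g Tw).mpr hle
    have hle2 : g' ≤ downN nwI R σ Tw := gc.monotone_u hfT
    by_cases h : g' = downN nwI R σ Tw
    · have : upPi andI R σ g' = f' := gc.l_u_l_eq_l g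
      have hs : upPi andI R σ (downN nwI R σ Tw) = Tw := hsolv w
      rw [h, hs] at this
      exact this.symm
    · exact (hno ⟨g', f', hconc, hgg', lt_of_le_of_ne hle2 h⟩).elim
end

section
/- Let Y ⊆ U be an E-consistent set of (U,V,R,σ) and suppose R ⊙_σ X = T is solvable. Then X̄ ∈ L₂^{V×W} is a solution of the Y-reduced equation R_Y ⊙_σ X = T_Y if and only if X̄ is a solution of the complete equation R ⊙_σ X = T. -/
/-- `Y ⊆ U` is E-consistent: the extents of the concept lattice of the restricted
context `(Y,V,R_Y,σ|_{Y×V})` coincide with those of the full context. -/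
def EConsistent {U V P L1 L2 : Type*} [CompleteLattice L1] [CompleteLattice L2]
    [PartialOrder P] {n : ℕ} (andI : Fin n → P → L2 → L1)
    (nwI : Fin n → L1 → P → L2) (R : U → V → P) (σ : U → V → Fin n)
    (Y : Set U) : Prop :=
  ∀ g : V → L2, (∃ f : U → L1, IsConcept andI nwI R σ g f) ↔
    (∃ f' : Y → L1,
      IsConcept andI nwI (fun (y : Y) v => R y v) (fun (y : Y) v => σ y v) g f')

section Aux

variable {A B P L1 L2 : Type*} [CompleteLattice L1] [CompleteLattice L2]
  [PartialOrder P] {n : ℕ} {andI : Fin n → P → L2 → L1} {nwI : Fin n → L1 → P → L2}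

lemma upPi_gal
    (adj2 : ∀ (i : Fin n) (x : P) (y : L2) (z : L1), andI i x y ≤ z ↔ y ≤ nwI i z x)
    (R : A → B → P) (σ : A → B → Fin n) (g : B → L2) (f : A → L1) :
    upPi andI R σ g ≤ f ↔ g ≤ downN nwI R σ f := by
  simp only [upPi, downN, Pi.le_def, iSup_le_iff, le_iInf_iff]
  constructor
  · intro h b a; exact (adj2 _ _ _ _).mp (h a b)
  · intro h a b; exact (adj2 _ _ _ _).mpr (h b a)

lemma upPi_mono
    (adj2 : ∀ (i : Fin n) (x : P) (y : L2) (z : L1), andI i x y ≤ z ↔ y ≤ nwI i z x)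
    (R : A → B → P) (σ : A → B → Fin n) {g g' : B → L2} (h : g ≤ g') :
    upPi andI R σ g ≤ upPi andI R σ g' :=
  (upPi_gal adj2 R σ g _).mpr (h.trans ((upPi_gal adj2 R σ g' _).mp le_rfl))

lemma downN_mono
    (adj2 : ∀ (i : Fin n) (x : P) (y : L2) (z : L1), andI i x y ≤ z ↔ y ≤ nwI i z x)
    (R : A → B → P) (σ : A → B → Fin n) {f f' : A → L1} (h : f ≤ f') :
    downN nwI R σ f ≤ downN nwI R σ f' :=
  (upPi_gal adj2 R σ _ f').mp (((upPi_gal adj2 R σ _ f).mpr le_rfl).trans h)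

lemma upPi_downN_upPi
    (adj2 : ∀ (i : Fin n) (x : P) (y : L2) (z : L1), andI i x y ≤ z ↔ y ≤ nwI i z x)
    (R : A → B → P) (σ : A → B → Fin n) (g : B → L2) :
    upPi andI R σ (downN nwI R σ (upPi andI R σ g)) = upPi andI R σ g :=
  le_antisymm ((upPi_gal adj2 R σ _ _).mpr le_rfl)
    (upPi_mono adj2 R σ ((upPi_gal adj2 R σ g _).mp le_rfl))

end Aux

/-- If `Y` is E-consistent and `R ⊙_σ X = T` is solvable, then `X̄` solves the
`Y`-reduced equation iff it solves the complete equation. -/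
theorem reduced_solution_iff_solution
    {U V W P L1 L2 : Type*} [Finite U] [Finite V] [Finite W]
    [CompleteLattice L1] [CompleteLattice L2] [PartialOrder P] {n : ℕ}
    (andI : Fin n → P → L2 → L1) (swI : Fin n → L1 → L2 → P)
    (nwI : Fin n → L1 → P → L2)
    (adj1 : ∀ (i : Fin n) (x : P) (y : L2) (z : L1), x ≤ swI i z y ↔ andI i x y ≤ z)
    (adj2 : ∀ (i : Fin n) (x : P) (y : L2) (z : L1), andI i x y ≤ z ↔ y ≤ nwI i z x)
    (R : U → V → P) (σ : U → V → Fin n) (T : U → W → L1) (Y : Set U)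
    (hY : EConsistent andI nwI R σ Y)
    (hsolv : ∃ X : V → W → L2, supComp andI R σ X = T)
    (Xbar : V → W → L2) :
    (supComp andI (fun (y : Y) v => R y v) (fun (y : Y) v => σ y v) Xbar
        = fun (y : Y) w => T y w) ↔
      supComp andI R σ Xbar = T := by
  set RY : Y → V → P := fun (y : Y) v => R y v with hRY
  set σY : Y → V → Fin n := fun (y : Y) v => σ y v with hσY
  constructor
  · intro hred
    funext u w
    set g : V → L2 := fun v => Xbar v w with hg
    set Tw : U → L1 := fun u => T u w with hTwdef
    set TYw : Y → L1 := fun (y : Y) => T y w with hTYwdef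
    -- The full greatest solution column
    obtain ⟨X, hX⟩ := hsolv
    set gstar : V → L2 := downN nwI R σ Tw with hgstar
    have hclos : upPi andI R σ gstar = Tw := by
      have hTw : upPi andI R σ (fun v => X v w) = Tw := by
        funext a; exact congrFun (congrFun hX a) w
      rw [hgstar, ← hTw]
      exact upPi_downN_upPi adj2 R σ _
    -- gstar is a full extent, hence by E-consistency a restricted extent
    have hfull : ∃ f : U → L1, IsConcept andI nwI R σ gstar f :=
      ⟨Tw, rfl, hclos⟩
    obtain ⟨f', hf'1, hf'2⟩ := (hY gstar).mp hfull
    rw [← hRY, ← hσY] at hf'1 hf'2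
    -- the restricted intent of gstar is TYw
    have hupYgstar : upPi andI RY σY gstar = TYw := by
      funext y
      have : upPi andI RY σY gstar y = upPi andI R σ gstar (y : U) := rfl
      rw [this, hclos]
    have hkey : downN nwI RY σY TYw = gstar := by
      rw [← hupYgstar, hf'2, hf'1]
    -- the reduced equation says upPi of g over Y equals TYw
    have hredg : upPi andI RY σY g = TYw := by
      funext y; exact congrFun (congrFun hred y) w
    have hg_le : g ≤ gstar := by
      rw [← hkey]
      exact (upPi_gal adj2 RY σY g TYw).mp hredg.le
    -- closure of g in the full context
    set h : V → L2 := downN nwI R σ (upPi andI R σ g) with hh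
    have hg_le_h : g ≤ h := (upPi_gal adj2 R σ g _).mp le_rfl
    have hh_le : h ≤ gstar := by
      rw [hgstar, ← hclos]
      exact downN_mono adj2 R σ (upPi_mono adj2 R σ hg_le)
    have hhfull : ∃ f : U → L1, IsConcept andI nwI R σ h f :=
      ⟨upPi andI R σ g, rfl, upPi_downN_upPi adj2 R σ g⟩
    obtain ⟨f2, hf21, hf22⟩ := (hY h).mp hhfull
    rw [← hRY, ← hσY] at hf21 hf22
    have hupYh : upPi andI RY σY h = TYw :=
      le_antisymm (by rw [← hupYgstar]; exact upPi_mono adj2 RY σY hh_le)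
        (by rw [← hredg]; exact upPi_mono adj2 RY σY hg_le_h)
    have hh_eq : h = gstar := by
      rw [← hkey, ← hupYh, hf22, hf21]
    have : upPi andI R σ g = Tw := by
      rw [← hclos, ← hh_eq, hh]
      exact (upPi_downN_upPi adj2 R σ g).symm
    exact congrFun this u
  · intro hfull
    funext y w
    exact congrFun (congrFun hfull y) w
end

section
/- If the equation R ⊙_σ X = T is solvable and Y ⊆ U is E-consistent, then for each w ∈ W, the concept of the restricted context (Y,V,R_Y,σ|_{Y×V}) whose extent is T_w^{↓N} has intent (T_Y)_w; equivalently, (T_w^{↓N})^{↑π_Y} = (T_Y)_w and (T_Y)_w^{↓N_Y} = T_w^{↓N}. -/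
/-- If the equation is solvable and `Y` is E-consistent, the concept of the
restricted context with extent `T_w^{↓N}` has intent `(T_Y)_w`:
`(T_w^{↓N})^{↑π_Y} = (T_Y)_w` and `(T_Y)_w^{↓N_Y} = T_w^{↓N}`. -/
theorem restricted_concept_of_Tw
    {U V W P L1 L2 : Type*} [Finite U] [Finite V] [Finite W]
    [CompleteLattice L1] [CompleteLattice L2] [PartialOrder P] {n : ℕ}
    (andI : Fin n → P → L2 → L1) (swI : Fin n → L1 → L2 → P)
    (nwI : Fin n → L1 → P → L2)
    (adj1 : ∀ (i : Fin n) (x : P) (y : L2) (z : L1), x ≤ swI i z y ↔ andI i x y ≤ z)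
    (adj2 : ∀ (i : Fin n) (x : P) (y : L2) (z : L1), andI i x y ≤ z ↔ y ≤ nwI i z x)
    (R : U → V → P) (σ : U → V → Fin n) (T : U → W → L1) (Y : Set U)
    (hY : EConsistent andI nwI R σ Y)
    (hsolv : ∀ w : W,
      upPi andI R σ (downN nwI R σ (fun u => T u w)) = fun u => T u w) :
    ∀ w : W,
      (upPi andI (fun (y : Y) v => R y v) (fun (y : Y) v => σ y v)
          (downN nwI R σ (fun u => T u w)) = fun (y : Y) => T y w) ∧
      (downN nwI (fun (y : Y) v => R y v) (fun (y : Y) v => σ y v)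
          (fun (y : Y) => T y w) = downN nwI R σ (fun u => T u w)) := by
  intro w
  set g : V → L2 := downN nwI R σ (fun u => T u w) with hg
  have h1 : upPi andI (fun (y : Y) v => R y v) (fun (y : Y) v => σ y v) g
      = fun (y : Y) => T y w := by
    funext y
    have := congrFun (hsolv w) (y : U)
    simpa [upPi, hg] using this
  refine ⟨h1, ?_⟩
  have hfull : ∃ f : U → L1, IsConcept andI nwI R σ g f :=
    ⟨fun u => T u w, rfl, hsolv w⟩
  obtain ⟨f', hf1, hf2⟩ := (hY g).mp hfull
  have hf' : f' = fun (y : Y) => T y w := by rw [← hf2, h1]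
  rw [← hf', hf1]
end
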